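/- Let X be a finite nonempty set with n = |X|, and let Δ_1, …, Δ_N be subsets of X with weights defined as w_t(x) = (1/n)·2^{c_t(x)}, where c_t(x) = #{s : 1 ≤ s ≤ t and x ∈ Δ_s}. Assume that for every t ∈ {1, …, N}, Σ_{x ∈ Δ_t} w_{t−1}(x) < 1. Let T ⊆ X be a finite set such that Δ_t ∩ T ≠ ∅ for every t ∈ {1, …, N}. Then N ≤ |T| · log₂(2n). In words: if every doubling step doubles the weight of at least one element of T, the total number of doubling steps is at most |T| lg(2|X|). -/

import Mathlib

/-!
Every element `x` is doubled at most `lg (2n)` times: its weight starts at `1/n`, and it is only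
doubled while it lies in a region of total weight `< 1`, so its weight always stays `< 2`.
Since every doubling region meets `T`, double counting the incidences `x ∈ Δ t` with `x ∈ T`
gives `N ≤ ∑_{x ∈ T} c_N(x) ≤ |T| lg (2n)`.
-/

open Finset

section DoublingCount

variable {X : Type*} [DecidableEq X] (Δ : ℕ → Finset X)

def doublingCount (t : ℕ) (x : X) : ℕ := #{s ∈ Icc 1 t | x ∈ Δ s}

@[simp]
lemma doublingCount_zero (x : X) : doublingCount Δ 0 x = 0 := by
  simp [doublingCount]

lemma doublingCount_succ (t : ℕ) (x : X) :
    doublingCount Δ (t + 1) x = doublingCount Δ t x + if x ∈ Δ (t + 1) then 1 else 0 := by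
  rw [doublingCount, ← insert_Icc_right_eq_Icc_add_one (Nat.le_add_left 1 t), filter_insert]
  split_ifs with hx
  · rw [card_insert_of_notMem (by simp), doublingCount]
  · rfl

variable {Δ} {n : ℝ} {N : ℕ}

lemma two_pow_doublingCount_lt (hn : 1 ≤ n)
    (hstep : ∀ t, 1 ≤ t → t ≤ N → ∑ x ∈ Δ t, 1 / n * 2 ^ doublingCount Δ (t - 1) x < 1)
    {t : ℕ} (ht : t ≤ N) (x : X) : (2 : ℝ) ^ doublingCount Δ t x < 2 * n := by
  induction t with
  | zero => simp only [doublingCount_zero, pow_zero]; linarith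
  | succ t ih =>
    rw [doublingCount_succ]
    split_ifs with hx
    · have hweight : 1 / n * 2 ^ doublingCount Δ t x < 1 :=
        (single_le_sum (fun y _ => by positivity) hx).trans_lt (hstep (t + 1) (Nat.le_add_left 1 t) ht)
      rw [one_div_mul_eq_div, div_lt_one (by linarith)] at hweight
      rw [pow_succ]
      linarith
    · simpa using ih (by omega)

lemma doublingCount_le_logb (hn : 1 ≤ n)
    (hstep : ∀ t, 1 ≤ t → t ≤ N → ∑ x ∈ Δ t, 1 / n * 2 ^ doublingCount Δ (t - 1) x < 1)
    (x : X) : (doublingCount Δ N x : ℝ) ≤ Real.logb 2 (2 * n) := by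
  rw [Real.le_logb_iff_rpow_le one_lt_two (by linarith), Real.rpow_natCast]
  exact (two_pow_doublingCount_lt hn hstep le_rfl x).le

end DoublingCount

/-- first part of Lemma 2 of the paper. With the teaching oracle's
weight dynamics (`w t x = (1/n) * 2 ^ (c t x)`, `c t x = #{s : 1 ≤ s ≤ t, x ∈ Δ s}`,
each doubling step `t` satisfying `∑ x ∈ Δ t, w (t-1) x < 1`), if every doubling
region `Δ t` (for `1 ≤ t ≤ N`) intersects a fixed finite set `T ⊆ X`, then the
total number of doubling steps satisfies `N ≤ |T| * log₂ (2n)`. -/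
theorem number_of_doublings_le
    {X : Type*} [Fintype X] [Nonempty X] [DecidableEq X]
    (N : ℕ) (Δ : ℕ → Finset X)
    (c : ℕ → X → ℕ)
    (hc : ∀ t x, c t x = ((Finset.Icc 1 t).filter (fun s => x ∈ Δ s)).card)
    (w : ℕ → X → ℝ)
    (hw : ∀ t x, w t x = (1 / (Fintype.card X : ℝ)) * 2 ^ (c t x))
    (hstep : ∀ t, 1 ≤ t → t ≤ N → ∑ x ∈ Δ t, w (t - 1) x < 1)
    (T : Finset X)
    (hT : ∀ t, 1 ≤ t → t ≤ N → ∃ x ∈ Δ t, x ∈ T) :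
    (N : ℝ) ≤ T.card * Real.logb 2 (2 * Fintype.card X) := by
  obtain rfl : c = doublingCount Δ := funext₂ hc
  obtain rfl : w = fun t x => 1 / (Fintype.card X : ℝ) * 2 ^ doublingCount Δ t x := funext₂ hw
  have hn : (1 : ℝ) ≤ Fintype.card X := by exact_mod_cast Fintype.card_pos
  have hdouble := card_nsmul_le_card_nsmul (s := Icc 1 N) (t := T) (fun s x => x ∈ Δ s)
    (m := (1 : ℝ)) (n := Real.logb 2 (2 * Fintype.card X))
    (fun s hs => by
      obtain ⟨x, hxΔ, hxT⟩ := hT s (mem_Icc.1 hs).1 (mem_Icc.1 hs).2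
      exact_mod_cast card_pos.2 ⟨x, mem_filter.2 ⟨hxT, hxΔ⟩⟩)
    (fun x _ => doublingCount_le_logb hn hstep x)
  simpa using hdouble
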